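/- arXiv:2601.03998 — 6 statements merged into one kernel-verified Lean document; each statement's English description precedes it below -/
import Mathlib

section
/- For |q|<1, the sum over n≥0 of q^{n(n+1)/2}/(-q;q)_{n+1} equals 1. -/
open scoped BigOperators

/-- The finite q-Pochhammer symbol `(a;q)_n = ∏_{j=0}^{n-1} (1 - a q^j)`. -/
noncomputable def qPoch (a q : ℂ) (n : ℕ) : ℂ := ∏ j ∈ Finset.range n, (1 - a * q ^ j)

/-- For |q|<1, `∑_{n≥0} q^{n(n+1)/2} / (-q;q)_{n+1} = 1`. -/
theorem stmt_0 (q : ℂ) (hq : ‖q‖ < 1) :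
    ∑' n : ℕ, q ^ (n * (n + 1) / 2) / qPoch (-q) q (n + 1) = 1 := by
  set a : ℕ → ℂ := fun n => q ^ (n * (n + 1) / 2) / qPoch (-q) q n with ha
  have hfac : ∀ k : ℕ, (1 : ℂ) + q ^ (k + 1) ≠ 0 := by
    intro k h
    have h1 : q ^ (k + 1) = -1 := by linear_combination h
    have h2 : ‖q ^ (k + 1)‖ < 1 := by
      rw [norm_pow]
      exact pow_lt_one₀ (norm_nonneg q) hq (Nat.succ_ne_zero k)
    rw [h1] at h2; simp at h2
  have hP : ∀ n : ℕ, qPoch (-q) q n ≠ 0 := by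
    intro n
    rw [qPoch]
    apply Finset.prod_ne_zero_iff.mpr
    intro j _ h
    apply hfac j
    rw [← h]; ring
  have hPsucc : ∀ n : ℕ, qPoch (-q) q (n + 1) = qPoch (-q) q n * (1 + q ^ (n + 1)) := by
    intro n
    rw [qPoch, qPoch, Finset.prod_range_succ]
    ring
  have hstep : ∀ n : ℕ, a (n + 1) = a n * (q ^ (n + 1) / (1 + q ^ (n + 1))) := by
    intro n
    simp only [ha]
    have e : (n + 1) * ((n + 1) + 1) / 2 = n * (n + 1) / 2 + (n + 1) := by
      obtain ⟨m, hm⟩ := Nat.even_mul_succ_self n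
      have h2 : (n + 1) * ((n + 1) + 1) = n * (n + 1) + 2 * (n + 1) := by ring
      omega
    rw [e, hPsucc n, pow_add]
    field_simp
  -- summability of a via ratio test
  have hratio : ∀ᶠ n in Filter.atTop, ‖a (n + 1)‖ ≤ (1 / 2 : ℝ) * ‖a n‖ := by
    have htend : Filter.Tendsto (fun n : ℕ => ‖q‖ ^ (n + 1)) Filter.atTop (nhds 0) := by
      have := tendsto_pow_atTop_nhds_zero_of_lt_one (norm_nonneg q) hq
      exact this.comp (Filter.tendsto_add_atTop_nat 1)
    have hev : ∀ᶠ n in Filter.atTop, ‖q‖ ^ (n + 1) < 1 / 3 := by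
      have := htend.eventually (gt_mem_nhds (by norm_num : (0:ℝ) < 1/3))
      exact this
    filter_upwards [hev] with n hn
    rw [hstep n, norm_mul, mul_comm]
    gcongr
    rw [norm_div, norm_pow]
    have hlow : (2/3 : ℝ) ≤ ‖1 + q ^ (n + 1)‖ := by
      have := norm_sub_norm_le (1 : ℂ) (-(q ^ (n + 1)))
      simp only [sub_neg_eq_add, norm_one, norm_neg] at this
      have h2 : ‖q ^ (n+1)‖ < 1/3 := by rw [norm_pow]; exact hn
      linarith
    rw [div_le_iff₀ (by linarith)]
    nlinarith [norm_nonneg (1 + q ^ (n+1))]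
  have hsumA : Summable a :=
    summable_of_ratio_norm_eventually_le (by norm_num : (1/2 : ℝ) < 1) hratio
  have haz : Filter.Tendsto a Filter.atTop (nhds 0) := hsumA.tendsto_atTop_zero
  -- the summand is a n - a (n+1)
  have hfe : ∀ n : ℕ, q ^ (n * (n + 1) / 2) / qPoch (-q) q (n + 1) = a n - a (n + 1) := by
    intro n
    rw [hstep n]
    simp only [ha]
    rw [hPsucc n]
    have h1 := hP n
    have h2 := hfac n
    field_simp
    ring
  have hsumF : Summable (fun n => a n - a (n + 1)) :=
    hsumA.sub ((summable_nat_add_iff 1).mpr hsumA)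
  have hS := hsumF.hasSum
  have hpart : ∀ N : ℕ, ∑ n ∈ Finset.range N, (a n - a (n + 1)) = a 0 - a N := by
    intro N; exact Finset.sum_range_sub' a N
  have ha0 : a 0 = 1 := by simp [ha, qPoch]
  have htend1 : Filter.Tendsto (fun N => ∑ n ∈ Finset.range N, (a n - a (n + 1)))
      Filter.atTop (nhds 1) := by
    simp only [hpart, ha0]
    have := (tendsto_const_nhds (x := (1:ℂ))).sub haz
    simpa using this
  have hval : ∑' n : ℕ, (a n - a (n + 1)) = 1 :=
    tendsto_nhds_unique hS.tendsto_sum_nat htend1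
  calc ∑' n : ℕ, q ^ (n * (n + 1) / 2) / qPoch (-q) q (n + 1)
      = ∑' n : ℕ, (a n - a (n + 1)) := tsum_congr hfe
    _ = 1 := hval
end

section
/- For |q|<1, the sum over n≥1 of q^{2n²-n}/(-q;q)_{2n} equals the sum over all integers n of sgn(n)·q^{n(3n-1)/2}, where sgn(0)=0. -/
/-!
Write `P_c(k) = (-q^{c+1};q)_k`, `T(k) = k(k+1)/2` and
`V_c = ∑_{k≥0} (-1)^k q^{T(k+1)+2c(k+1)} / P_c(k+1)`. Pairing the terms `2n` and `2n+1` of `V_0`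
gives the left-hand side, since `1/P_0(2n+1) - q^{2n+2}/P_0(2n+2) = 1/P_0(2n+2)`.
Using `P_c(k+1) = (1+q^{c+1}) P_{c+1}(k)`, peeling off first terms and the same splitting of
`1/P_c(k+1)` give `V_c = q^{2c+1} - q^{3c+2} + q^{3c+2} V_{c+1}`; iterating this telescopes `V_0`
into `∑_{n≥0} (q^{(n+1)(3n+2)/2} - q^{(n+1)(3n+4)/2})`, the right-hand side.
-/

open scoped BigOperators

open Filter Finset

def triangular : ℕ → ℕ
  | 0 => 0
  | k + 1 => triangular k + (k + 1)

theorem two_mul_triangular (k : ℕ) : 2 * triangular k = k * (k + 1) := by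
  induction k with
  | zero => rfl
  | succ k ih => rw [triangular, Nat.mul_add, ih]; ring

theorem two_mul_sq_sub_eq_triangular (n : ℕ) :
    2 * (n + 1) ^ 2 - (n + 1) = triangular (2 * n + 1) := by
  grind [two_mul_triangular]

theorem pentagonal_natCast_add_one (n : ℕ) :
    pentagonal ((n : ℤ) + 1) = pentagonal (-(n : ℤ)) + (2 * n + 1) := by
  grind [two_mul_natCast_pentagonal, two_mul_natCast_pentagonal_neg]

theorem pentagonal_neg_natCast_add_one (n : ℕ) :
    pentagonal (-((n : ℤ) + 1)) = pentagonal (-(n : ℤ)) + (3 * n + 2) := by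
  grind [two_mul_natCast_pentagonal, two_mul_natCast_pentagonal_neg]

theorem le_pentagonal_neg_natCast (n : ℕ) : n ≤ pentagonal (-(n : ℤ)) := by
  have h := two_mul_natCast_pentagonal_neg n
  have : (n : ℤ) ≤ pentagonal (-(n : ℤ)) := by nlinarith
  exact_mod_cast this

theorem summable_pow_triangular_mul_pow {r C : ℝ} (hr₀ : 0 ≤ r) (hr : r < 1) (hC : 0 ≤ C) :
    Summable fun k => r ^ triangular k * C ^ k := by
  refine summable_of_ratio_norm_eventually_le (r := 1 / 2) (by norm_num) ?_
  have hratio : Tendsto (fun k : ℕ => r ^ (k + 1) * C) atTop (nhds 0) := by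
    have := ((tendsto_pow_atTop_nhds_zero_of_lt_one hr₀ hr).mul_const C).comp
      (tendsto_add_atTop_nat 1)
    rwa [zero_mul] at this
  filter_upwards [hratio.eventually_le_const (by norm_num : (0 : ℝ) < 1 / 2)] with k hk
  have hnn : 0 ≤ r ^ triangular k * C ^ k := by positivity
  rw [Real.norm_of_nonneg (by positivity), Real.norm_of_nonneg hnn, triangular, pow_add,
    pow_succ C]
  calc r ^ triangular k * r ^ (k + 1) * (C ^ k * C)
      = (r ^ triangular k * C ^ k) * (r ^ (k + 1) * C) := by ring
    _ ≤ (r ^ triangular k * C ^ k) * (1 / 2) := mul_le_mul_of_nonneg_left hk hnn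
    _ = 1 / 2 * (r ^ triangular k * C ^ k) := by ring

section qPoch

variable (a q : ℂ)

theorem qPoch_zero : qPoch a q 0 = 1 := by simp [qPoch]

theorem qPoch_succ (n : ℕ) : qPoch a q (n + 1) = qPoch a q n * (1 - a * q ^ n) :=
  prod_range_succ _ n

theorem qPoch_succ' (n : ℕ) : qPoch a q (n + 1) = (1 - a) * qPoch (a * q) q n := by
  rw [qPoch, prod_range_succ', pow_zero, mul_one, mul_comm, qPoch]
  congr 1
  exact prod_congr rfl fun j _ => by ring

variable {a q}

theorem one_sub_norm_pow_le_norm_qPoch (ha : ‖a‖ ≤ 1) (hq : ‖q‖ ≤ 1) (n : ℕ) :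
    (1 - ‖a‖) ^ n ≤ ‖qPoch a q n‖ := by
  rw [qPoch, norm_prod]
  calc (1 - ‖a‖) ^ n = ∏ _j ∈ range n, (1 - ‖a‖) := by rw [prod_const, card_range]
    _ ≤ _ := prod_le_prod (fun _ _ => sub_nonneg.mpr ha) fun j _ => ?_
  calc 1 - ‖a‖ ≤ 1 - ‖a * q ^ j‖ := by
        rw [norm_mul, norm_pow]
        nlinarith [pow_le_one₀ (norm_nonneg q) hq (n := j), norm_nonneg a, norm_nonneg (q ^ j)]
    _ ≤ ‖1 - a * q ^ j‖ := by simpa using norm_sub_norm_le (1 : ℂ) (a * q ^ j)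

end qPoch

section Series

variable {q : ℂ}

theorem norm_neg_pow_succ_le (hq : ‖q‖ < 1) (c : ℕ) : ‖-q ^ (c + 1)‖ ≤ ‖q‖ := by
  rw [norm_neg, norm_pow]
  exact pow_le_of_le_one (norm_nonneg q) hq.le (Nat.succ_ne_zero c)

theorem one_sub_norm_pow_le_norm_qPoch_neg_pow (hq : ‖q‖ < 1) (c k : ℕ) :
    (1 - ‖q‖) ^ k ≤ ‖qPoch (-q ^ (c + 1)) q k‖ :=
  (pow_le_pow_left₀ (by linarith) (by linarith [norm_neg_pow_succ_le hq c]) k).trans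
    (one_sub_norm_pow_le_norm_qPoch ((norm_neg_pow_succ_le hq c).trans hq.le) hq.le k)

theorem qPoch_neg_pow_ne_zero (hq : ‖q‖ < 1) (c k : ℕ) : qPoch (-q ^ (c + 1)) q k ≠ 0 := by
  intro h
  have := one_sub_norm_pow_le_norm_qPoch_neg_pow hq c k
  rw [h, norm_zero] at this
  linarith [pow_pos (by linarith : (0 : ℝ) < 1 - ‖q‖) k]

theorem one_add_pow_ne_zero (hq : ‖q‖ < 1) (m : ℕ) (hm : m ≠ 0) : 1 + q ^ m ≠ 0 := by
  intro h
  have : ‖q ^ m‖ = 1 := by rw [eq_neg_of_add_eq_zero_right h, norm_neg, norm_one]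
  rw [norm_pow] at this
  linarith [pow_lt_one₀ (norm_nonneg q) hq hm]

variable (q)

/-- `V_c` of the header is `altSeries q 1 c (2 * c)`; letting `d ∈ {0, 1}` and `e` vary gives a
family closed under the manipulations behind its recurrence. -/
noncomputable def altTerm (d c e k : ℕ) : ℂ :=
  (-1) ^ k * (q ^ (triangular (k + 1) + e * (k + 1)) / qPoch (-q ^ (c + 1)) q (k + d))

noncomputable def altSeries (d c e : ℕ) : ℂ := ∑' k, altTerm q d c e k

variable {q}

theorem norm_altTerm_le (hq : ‖q‖ < 1) {d : ℕ} (hd : d ≤ 1) (c e k : ℕ) :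
    ‖altTerm q d c e k‖ ≤ ‖q‖ ^ triangular (k + 1) * (1 - ‖q‖)⁻¹ ^ (k + 1) := by
  have h₀ : 0 < 1 - ‖q‖ := by linarith
  rw [altTerm, norm_mul, norm_pow, norm_neg, norm_one, one_pow, one_mul, norm_div, norm_pow,
    inv_pow, ← div_eq_mul_inv]
  gcongr ?_ / ?_
  · exact pow_le_pow_of_le_one (norm_nonneg q) hq.le (Nat.le_add_right _ _)
  · exact (pow_le_pow_of_le_one h₀.le (by linarith [norm_nonneg q]) (by omega)).trans
      (one_sub_norm_pow_le_norm_qPoch_neg_pow hq c _)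

theorem summable_altTerm_bound (hq : ‖q‖ < 1) :
    Summable fun k => ‖q‖ ^ triangular (k + 1) * (1 - ‖q‖)⁻¹ ^ (k + 1) :=
  (summable_nat_add_iff 1).mpr <| summable_pow_triangular_mul_pow (norm_nonneg q) hq
    (inv_nonneg.mpr (by linarith))

theorem summable_altTerm (hq : ‖q‖ < 1) {d : ℕ} (hd : d ≤ 1) (c e : ℕ) :
    Summable (altTerm q d c e) :=
  (summable_altTerm_bound hq).of_norm_bounded (norm_altTerm_le hq hd c e)

theorem norm_altSeries_le (hq : ‖q‖ < 1) {d : ℕ} (hd : d ≤ 1) (c e : ℕ) :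
    ‖altSeries q d c e‖ ≤ ∑' k, ‖q‖ ^ triangular (k + 1) * (1 - ‖q‖)⁻¹ ^ (k + 1) :=
  tsum_of_norm_bounded (summable_altTerm_bound hq).hasSum (norm_altTerm_le hq hd c e)

theorem altSeries_zero (hq : ‖q‖ < 1) (c e : ℕ) :
    altSeries q 0 c e = q ^ (e + 1) - q ^ (e + 1) * altSeries q 1 c (e + 1) := by
  have hterm : ∀ k, altTerm q 0 c e (k + 1) = -(q ^ (e + 1) * altTerm q 1 c (e + 1) k) := by
    intro k
    have hexp : triangular (k + 1 + 1) + e * (k + 1 + 1)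
        = (e + 1) + (triangular (k + 1) + (e + 1) * (k + 1)) := by
      rw [triangular]; ring
    simp only [altTerm, hexp, pow_add, pow_succ (-1 : ℂ)]
    ring
  rw [altSeries, (summable_altTerm hq zero_le_one c e).tsum_eq_zero_add, tsum_congr hterm,
    tsum_neg, tsum_mul_left, altSeries]
  simp only [altTerm, pow_zero, triangular, zero_add, mul_one, add_zero, qPoch_zero, div_one,
    one_mul]
  ring

theorem altSeries_one (hq : ‖q‖ < 1) (c e : ℕ) :
    altSeries q 1 c e = altSeries q 0 c e - q ^ c * altSeries q 1 c (e + 1) := by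
  rw [altSeries, altSeries, altSeries, ← tsum_mul_left,
    ← (summable_altTerm hq zero_le_one c e).tsum_sub
      ((summable_altTerm hq le_rfl c (e + 1)).mul_left _)]
  refine tsum_congr fun k => ?_
  have hP := qPoch_neg_pow_ne_zero hq c k
  have hx := one_add_pow_ne_zero hq (c + 1 + k) (by omega)
  have hsucc :
      qPoch (-q ^ (c + 1)) q (k + 1) = qPoch (-q ^ (c + 1)) q k * (1 + q ^ (c + 1 + k)) := by
    rw [qPoch_succ, pow_add]; ring
  simp only [altTerm, Nat.add_zero, hsucc]
  field_simp
  ring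

theorem one_add_pow_mul_altSeries_one (hq : ‖q‖ < 1) (c e : ℕ) :
    (1 + q ^ (c + 1)) * altSeries q 1 c e = altSeries q 0 (c + 1) e := by
  rw [altSeries, altSeries, ← tsum_mul_left]
  refine tsum_congr fun k => ?_
  have hx := one_add_pow_ne_zero hq (c + 1) (by omega)
  have hP := qPoch_neg_pow_ne_zero hq (c + 1) k
  simp only [altTerm, add_zero]
  rw [qPoch_succ', sub_neg_eq_add, neg_mul, ← pow_succ]
  field_simp

theorem altSeries_one_diag (hq : ‖q‖ < 1) (c : ℕ) :
    altSeries q 1 c (2 * c) = q ^ (2 * c + 1) - q ^ (3 * c + 2)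
      + q ^ (3 * c + 2) * altSeries q 1 (c + 1) (2 * (c + 1)) := by
  have h₁ := one_add_pow_mul_altSeries_one hq c (2 * c)
  have h₂ := altSeries_zero hq (c + 1) (2 * c)
  have h₃ := altSeries_one hq (c + 1) (2 * c + 1)
  have h₄ := altSeries_zero hq (c + 1) (2 * c + 1)
  rw [show 2 * (c + 1) = 2 * c + 1 + 1 by ring]
  refine mul_left_cancel₀ (one_add_pow_ne_zero hq (c + 1) (by omega)) ?_
  linear_combination h₁ + h₂ - q ^ (2 * c + 1) * h₃ - q ^ (2 * c + 1) * h₄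

theorem altSeries_one_zero_zero_eq_sum_add (hq : ‖q‖ < 1) (N : ℕ) :
    altSeries q 1 0 0
      = ∑ n ∈ range N, (q ^ pentagonal ((n : ℤ) + 1) - q ^ pentagonal (-((n : ℤ) + 1)))
        + q ^ pentagonal (-(N : ℤ)) * altSeries q 1 N (2 * N) := by
  induction N with
  | zero => simp [pentagonal]
  | succ N ih =>
    rw [sum_range_succ, ih, altSeries_one_diag hq N, Nat.cast_succ, pentagonal_natCast_add_one,
      pentagonal_neg_natCast_add_one]
    simp only [pow_add]
    ring

theorem summable_pow_comp_of_le (hq : ‖q‖ < 1) {f : ℕ → ℕ} (hf : ∀ n, n ≤ f n) :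
    Summable fun n => q ^ f n :=
  (summable_geometric_of_lt_one (norm_nonneg q) hq).of_norm_bounded fun n => by
    rw [norm_pow]; exact pow_le_pow_of_le_one (norm_nonneg q) hq.le (hf n)

theorem altSeries_one_zero_zero_eq_sub (hq : ‖q‖ < 1) {a b : ℂ}
    (ha : HasSum (fun n : ℕ => q ^ pentagonal ((n : ℤ) + 1)) a)
    (hb : HasSum (fun n : ℕ => q ^ pentagonal (-((n : ℤ) + 1))) b) :
    altSeries q 1 0 0 = a - b := by
  refine tendsto_nhds_unique ?_ (ha.sub hb).tendsto_sum_nat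
  obtain ⟨B, hB⟩ : ∃ B, ∀ N, ‖altSeries q 1 N (2 * N)‖ ≤ B :=
    ⟨_, fun N => norm_altSeries_le hq le_rfl N _⟩
  have hbound (N : ℕ) : ‖q ^ pentagonal (-(N : ℤ)) * altSeries q 1 N (2 * N)‖ ≤ ‖q‖ ^ N * B := by
    rw [norm_mul, norm_pow]
    exact mul_le_mul (pow_le_pow_of_le_one (norm_nonneg q) hq.le (le_pentagonal_neg_natCast N))
      (hB N) (norm_nonneg _) (by positivity)
  have hrem : Tendsto (fun N : ℕ => q ^ pentagonal (-(N : ℤ)) * altSeries q 1 N (2 * N)) atTop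
      (nhds 0) := by
    refine squeeze_zero_norm hbound ?_
    simpa using (tendsto_pow_atTop_nhds_zero_of_lt_one (norm_nonneg q) hq).mul_const B
  have hlim := (tendsto_const_nhds (x := altSeries q 1 0 0)).sub hrem
  rw [sub_zero] at hlim
  refine hlim.congr fun N => ?_
  rw [altSeries_one_zero_zero_eq_sum_add hq N, add_sub_cancel_right]

theorem altTerm_pair (hq : ‖q‖ < 1) (n : ℕ) :
    altTerm q 1 0 0 (2 * n) + altTerm q 1 0 0 (2 * n + 1)
      = q ^ (2 * (n + 1) ^ 2 - (n + 1)) / qPoch (-q) q (2 * (n + 1)) := by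
  have hP := qPoch_neg_pow_ne_zero hq 0 (2 * n + 1)
  have hx := one_add_pow_ne_zero hq (2 * n + 2) (by omega)
  have hsucc :
      qPoch (-q) q (2 * n + 1 + 1) = qPoch (-q) q (2 * n + 1) * (1 + q ^ (2 * n + 2)) := by
    rw [qPoch_succ]; ring
  have hT : triangular (2 * n + 1 + 1) = triangular (2 * n + 1) + (2 * n + 2) := rfl
  rw [zero_add, pow_one] at hP
  rw [two_mul_sq_sub_eq_triangular, show 2 * (n + 1) = 2 * n + 1 + 1 by ring]
  have hev : (-1 : ℂ) ^ (2 * n) = 1 := by rw [pow_mul]; norm_num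
  simp only [altTerm, zero_add, pow_one, zero_mul, add_zero, hsucc, hT, pow_add q _ (2 * n + 2),
    pow_succ (-1 : ℂ), hev]
  field_simp
  ring

theorem tsum_div_qPoch_eq_altSeries (hq : ‖q‖ < 1) :
    ∑' n : ℕ, q ^ (2 * (n + 1) ^ 2 - (n + 1)) / qPoch (-q) q (2 * (n + 1))
      = altSeries q 1 0 0 := by
  have hs := summable_altTerm hq le_rfl 0 0
  have heven : Summable fun n => altTerm q 1 0 0 (2 * n) :=
    hs.comp_injective fun a b h => by omega
  have hodd : Summable fun n => altTerm q 1 0 0 (2 * n + 1) :=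
    hs.comp_injective fun a b h => by omega
  rw [altSeries, ← tsum_even_add_odd heven hodd, ← heven.tsum_add hodd]
  exact tsum_congr fun n => (altTerm_pair hq n).symm

end Series

theorem hasSum_sign_mul_zpow {q a b : ℂ}
    (ha : HasSum (fun n : ℕ => q ^ pentagonal ((n : ℤ) + 1)) a)
    (hb : HasSum (fun n : ℕ => q ^ pentagonal (-((n : ℤ) + 1))) b) :
    HasSum (fun m : ℤ => (m.sign : ℂ) * q ^ (m * (3 * m - 1) / 2)) (a - b) := by
  have hpow : ∀ m : ℤ, q ^ (m * (3 * m - 1) / 2) = q ^ pentagonal m := fun m => by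
    rw [← natCast_pentagonal, zpow_natCast]
  have hpos :
      HasSum (fun n : ℕ => (((n : ℤ) + 1).sign : ℂ) * q ^ pentagonal ((n : ℤ) + 1)) a :=
    ha.congr_fun fun n => by rw [Int.sign_natCast_add_one, Int.cast_one, one_mul]
  have hneg : HasSum
      (fun n : ℕ => ((-((n : ℤ) + 1)).sign : ℂ) * q ^ pentagonal (-((n : ℤ) + 1))) (-b) :=
    hb.neg.congr_fun fun n => by
      rw [Int.sign_neg, Int.sign_natCast_add_one, Int.cast_neg, Int.cast_one, neg_one_mul]
  have h := HasSum.of_add_one_of_neg_add_one (f := fun m : ℤ => (m.sign : ℂ) * q ^ pentagonal m)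
    hpos hneg
  rw [Int.sign_zero, Int.cast_zero, zero_mul, add_zero, ← sub_eq_add_neg] at h
  simpa only [hpow] using h

/-- For |q|<1, `∑_{n≥1} q^{2n²-n}/(-q;q)_{2n} = ∑_{n∈ℤ} sgn(n) q^{n(3n-1)/2}`. -/
theorem stmt_1 (q : ℂ) (hq : ‖q‖ < 1) :
    ∑' n : ℕ, q ^ (2 * (n + 1) ^ 2 - (n + 1)) / qPoch (-q) q (2 * (n + 1))
      = ∑' m : ℤ, (m.sign : ℂ) * q ^ (m * (3 * m - 1) / 2) := by
  have ha := (summable_pow_comp_of_le hq (f := fun n : ℕ => pentagonal ((n : ℤ) + 1))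
    fun n => by rw [pentagonal_natCast_add_one]; omega).hasSum
  have hb := (summable_pow_comp_of_le hq (f := fun n : ℕ => pentagonal (-((n : ℤ) + 1)))
    fun n => by rw [pentagonal_neg_natCast_add_one]; omega).hasSum
  rw [tsum_div_qPoch_eq_altSeries hq, altSeries_one_zero_zero_eq_sub hq ha hb,
    (hasSum_sign_mul_zpow ha hb).tsum_eq]
end

section
/- For |q|<1 and any complex ζ with |ζq|<1, the identity 1 + ∑_{n≥1} (-1)^n (ζ^{3n-1} q^{n(3n-1)/2} + ζ^{3n} q^{n(3n+1)/2}) = ∑_{n≥0} (-1)^n ζ^{2n} q^{n(n+1)/2}/(ζq;q)_n holds. -/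
/-!
Let `F(w) = ∑ c_n(w)` with `c_n(w) = (-1)^n w^{2n} q^{n(n+1)/2} / (wq;q)_n` (`fSeries q w` and
`fTerm q w n`), so the right-hand side is `F(ζ)`. Splitting
`(wq;q)_{n+2} = (1 - wq) (wq²;q)_n (1 - wq^{n+2})` gives the termwise identity
`(1 - wq) c_{n+2}(w) = w³q² (wq c_n(wq) - c_{n+1}(wq))`, and summing it yields the functional
equation `F(w) = 1 - w²q - w³q² F(wq)`. Applied at `w = ζq^N`, it shows that the remainders
`R_N = (-1)^N ζ^{3N} q^{N(3N+1)/2} (F(ζq^N) - 1)` (`pentagonalRemainder q ζ N`) telescope: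
`R_N - R_{N+1}` is the `N`-th pentagonal pair on the left, and `R_0 = F(ζ) - 1`. As
`‖ζq^N · q‖ ≤ ‖ζq‖ < 1`, the values `F(ζq^N)` are bounded uniformly in `N`, hence `R_N → 0`.
-/

open scoped BigOperators

open Filter Topology

theorem summable_norm_of_succ_eq_mul {𝕜 : Type*} [NormedField 𝕜] {f g : ℕ → 𝕜}
    (hf : ∀ n, f (n + 1) = g n * f n) (hg : Tendsto g atTop (𝓝 0)) :
    Summable fun n => ‖f n‖ := by
  refine summable_of_ratio_norm_eventually_le (r := 1 / 2) (by norm_num) ?_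
  filter_upwards [hg.norm.eventually_le_const (by norm_num : ‖(0 : 𝕜)‖ < 1 / 2)] with n hn
  simpa only [norm_norm, hf n, norm_mul] using mul_le_mul_of_nonneg_right hn (norm_nonneg _)

theorem hasSum_of_eq_sub_succ {G : Type*} [AddCommGroup G] [TopologicalSpace G]
    [IsTopologicalAddGroup G] [T2Space G] {f R : ℕ → G} (hf : Summable f)
    (hfR : ∀ n, f n = R n - R (n + 1)) (hR : Tendsto R atTop (𝓝 0)) : HasSum f (R 0) := by
  rw [hf.hasSum_iff_tendsto_nat]
  simp only [hfR, Finset.sum_range_sub']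
  simpa using tendsto_const_nhds.sub hR

theorem pow_div_two_of_eq {M : Type*} [Monoid M] (x : M) {a b c : ℕ} (h : a = b + 2 * c) :
    x ^ (a / 2) = x ^ (b / 2) * x ^ c := by
  rw [h, Nat.add_mul_div_left _ _ two_pos, pow_add]

theorem norm_mul_pow_le {q : ℂ} (hq : ‖q‖ ≤ 1) (z : ℂ) (n : ℕ) : ‖z * q ^ n‖ ≤ ‖z‖ := by
  rw [norm_mul, norm_pow]
  exact mul_le_of_le_one_right (norm_nonneg z) (pow_le_one₀ (norm_nonneg q) hq)

theorem norm_mul_pow_mul_le {q : ℂ} (hq : ‖q‖ ≤ 1) (z : ℂ) (n : ℕ) :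
    ‖z * q ^ n * q‖ ≤ ‖z * q‖ := by
  rw [mul_right_comm]
  exact norm_mul_pow_le hq _ n

namespace qPoch

theorem succ (a q : ℂ) (n : ℕ) : qPoch a q (n + 1) = qPoch a q n * (1 - a * q ^ n) :=
  Finset.prod_range_succ _ n

theorem succ' (a q : ℂ) (n : ℕ) : qPoch a q (n + 1) = (1 - a) * qPoch (a * q) q n := by
  simp only [qPoch, Finset.prod_range_succ', pow_zero, mul_one, pow_succ, mul_assoc, mul_comm]

theorem one_sub_norm_pow_le_norm {a q : ℂ} (ha : ‖a‖ ≤ 1) (hq : ‖q‖ ≤ 1) (n : ℕ) :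
    (1 - ‖a‖) ^ n ≤ ‖qPoch a q n‖ := by
  induction n with
  | zero => simp [qPoch]
  | succ n ih =>
    have hfactor : 1 - ‖a‖ ≤ ‖1 - a * q ^ n‖ := calc
      1 - ‖a‖ ≤ 1 - ‖a * q ^ n‖ := by
        rw [norm_mul, norm_pow]
        gcongr
        exact mul_le_of_le_one_right (norm_nonneg a) (pow_le_one₀ (norm_nonneg q) hq)
      _ ≤ ‖1 - a * q ^ n‖ := by simpa using norm_sub_norm_le (1 : ℂ) (a * q ^ n)
    rw [succ, norm_mul, pow_succ]
    exact mul_le_mul ih hfactor (by linarith) (norm_nonneg _)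

theorem ne_zero {a q : ℂ} (ha : ‖a‖ < 1) (hq : ‖q‖ ≤ 1) (n : ℕ) : qPoch a q n ≠ 0 :=
  norm_pos_iff.mp <| (pow_pos (sub_pos.mpr ha) n).trans_le (one_sub_norm_pow_le_norm ha.le hq n)

end qPoch

noncomputable def fTerm (q w : ℂ) (n : ℕ) : ℂ :=
  (-1) ^ n * w ^ (2 * n) * q ^ (n * (n + 1) / 2) / qPoch (w * q) q n

noncomputable def fSeries (q w : ℂ) : ℂ := ∑' n, fTerm q w n

section fSeries

variable {q w : ℂ}

theorem fTerm_zero (q w : ℂ) : fTerm q w 0 = 1 := by simp [fTerm, qPoch]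

theorem fTerm_succ (q w : ℂ) (n : ℕ) :
    fTerm q w (n + 1) = -(w ^ 2 * q ^ (n + 1)) / (1 - w * q * q ^ n) * fTerm q w n := by
  rw [fTerm, fTerm, qPoch.succ,
    pow_div_two_of_eq q (show (n + 1) * (n + 1 + 1) = n * (n + 1) + 2 * (n + 1) by ring),
    div_mul_div_comm, mul_comm (1 - _)]
  ring

theorem summable_fTerm (w : ℂ) (hq : ‖q‖ < 1) : Summable (fTerm q w) := by
  refine Summable.of_norm (summable_norm_of_succ_eq_mul (fTerm_succ q w) ?_)
  have hpow := tendsto_pow_atTop_nhds_zero_of_norm_lt_one hq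
  simpa [Pi.div_def] using ((hpow.comp (tendsto_add_atTop_nat 1)).const_mul (-w ^ 2)).div
    (tendsto_const_nhds.sub (hpow.const_mul (w * q))) (by simp)

theorem fTerm_add_two {n : ℕ} (h : qPoch (w * q) q (n + 2) ≠ 0) :
    (1 - w * q) * fTerm q w (n + 2) =
      w ^ 3 * q ^ 2 * (w * q * fTerm q (w * q) n - fTerm q (w * q) (n + 1)) := by
  rw [qPoch.succ', qPoch.succ] at h
  simp only [mul_ne_zero_iff] at h
  obtain ⟨h1, hP, h2⟩ := h
  simp only [fTerm]
  rw [qPoch.succ', qPoch.succ,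
    pow_div_two_of_eq q (show (n + 2) * (n + 2 + 1) = n * (n + 1) + 2 * (2 * n + 3) by ring),
    pow_div_two_of_eq q (show (n + 1) * (n + 1 + 1) = n * (n + 1) + 2 * (n + 1) by ring)]
  have h2' : 1 - w * q ^ 2 * q ^ n ≠ 0 := by rwa [sq, ← mul_assoc]
  field_simp
  ring

theorem fSeries_eq (hq : ‖q‖ < 1) (hw : ∀ n, qPoch (w * q) q n ≠ 0) :
    fSeries q w = 1 - w ^ 2 * q - w ^ 3 * q ^ 2 * fSeries q (w * q) := by
  have hwq : 1 - w * q ≠ 0 := by simpa [qPoch] using hw 1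
  have hS := summable_fTerm w hq
  have hS' := summable_fTerm (w * q) hq
  have htail : (1 - w * q) * ∑' n, fTerm q w (n + 2) =
      w ^ 3 * q ^ 2 * (w * q * fSeries q (w * q) - ∑' n, fTerm q (w * q) (n + 1)) := by
    rw [← tsum_mul_left, fSeries, ← tsum_mul_left,
      ← ((hS'.mul_left _).tsum_sub ((summable_nat_add_iff 1).mpr hS')), ← tsum_mul_left]
    exact tsum_congr fun n => fTerm_add_two (hw _)
  rw [fSeries, ← hS.sum_add_tsum_nat_add 2]
  rw [fSeries, ← hS'.sum_add_tsum_nat_add 1] at htail ⊢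
  simp only [Finset.sum_range_succ, Finset.sum_range_zero, fTerm_zero, zero_add] at htail ⊢
  rw [fTerm_succ, fTerm_zero]
  field_simp
  linear_combination htail

theorem norm_fTerm_le {ρ s : ℝ} (hw : ‖w‖ ≤ ρ) (hwq : ‖w * q‖ ≤ s) (hs : s < 1)
    (hq : ‖q‖ ≤ 1) (n : ℕ) :
    ‖fTerm q w n‖ ≤ ρ ^ (2 * n) * ‖q‖ ^ (n * (n + 1) / 2) / (1 - s) ^ n := by
  have hden : (1 - s) ^ n ≤ ‖qPoch (w * q) q n‖ :=
    (pow_le_pow_left₀ (by linarith) (by linarith) n).trans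
      (qPoch.one_sub_norm_pow_le_norm (hwq.trans hs.le) hq n)
  rw [fTerm, norm_div, norm_mul, norm_mul, norm_pow, norm_pow, norm_pow, norm_neg, norm_one,
    one_pow, one_mul]
  have hρ : 0 ≤ ρ := (norm_nonneg w).trans hw
  exact div_le_div₀ (by positivity) (by gcongr) (by positivity) hden

theorem exists_norm_fSeries_le (hq : ‖q‖ < 1) (ρ : ℝ) {s : ℝ} (hs : s < 1) :
    ∃ C, ∀ w : ℂ, ‖w‖ ≤ ρ → ‖w * q‖ ≤ s → ‖fSeries q w‖ ≤ C := by
  set B : ℕ → ℝ := fun n => ρ ^ (2 * n) * ‖q‖ ^ (n * (n + 1) / 2) / (1 - s) ^ n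
  have hB : ∀ n, B (n + 1) = ρ ^ 2 * ‖q‖ ^ (n + 1) / (1 - s) * B n := fun n => by
    simp only [B]
    rw [pow_div_two_of_eq ‖q‖ (show (n + 1) * (n + 1 + 1) = n * (n + 1) + 2 * (n + 1) by ring),
      pow_succ (1 - s), div_mul_div_comm, mul_comm (1 - s)]
    ring
  have hratio : Tendsto (fun n => ρ ^ 2 * ‖q‖ ^ (n + 1) / (1 - s)) atTop (𝓝 0) := by
    simpa using (((tendsto_pow_atTop_nhds_zero_of_lt_one (norm_nonneg q) hq).comp
      (tendsto_add_atTop_nat 1)).const_mul (ρ ^ 2)).div_const (1 - s)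
  refine ⟨∑' n, B n, fun w hw hwq => tsum_of_norm_bounded ?_ (norm_fTerm_le hw hwq hs hq.le)⟩
  exact (summable_norm_of_succ_eq_mul hB hratio).of_norm.hasSum

end fSeries

noncomputable def pentagonalTerm (q ζ : ℂ) (n : ℕ) : ℂ :=
  (-1) ^ n * ζ ^ (3 * n) * q ^ (n * (3 * n + 1) / 2)

noncomputable def pentagonalPair (q ζ : ℂ) (n : ℕ) : ℂ :=
  (-1 : ℂ) ^ (n + 1) *
    (ζ ^ (3 * (n + 1) - 1) * q ^ ((n + 1) * (3 * (n + 1) - 1) / 2)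
      + ζ ^ (3 * (n + 1)) * q ^ ((n + 1) * (3 * (n + 1) + 1) / 2))

noncomputable def pentagonalRemainder (q ζ : ℂ) (n : ℕ) : ℂ :=
  pentagonalTerm q ζ n * (fSeries q (ζ * q ^ n) - 1)

section pentagonal

variable {q ζ : ℂ}

theorem pentagonalTerm_succ (q ζ : ℂ) (n : ℕ) :
    pentagonalTerm q ζ (n + 1) = -(ζ ^ 3 * q ^ (3 * n + 2)) * pentagonalTerm q ζ n := by
  rw [pentagonalTerm, pentagonalTerm, pow_div_two_of_eq q
    (show (n + 1) * (3 * (n + 1) + 1) = n * (3 * n + 1) + 2 * (3 * n + 2) by ring)]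
  ring

theorem pentagonalPair_eq (q ζ : ℂ) (n : ℕ) :
    pentagonalPair q ζ n =
      -(ζ ^ 2 * q ^ (2 * n + 1)) * pentagonalTerm q ζ n + pentagonalTerm q ζ (n + 1) := by
  have h : 3 * (n + 1) - 1 = 3 * n + 2 := by omega
  rw [pentagonalPair, pentagonalTerm, pentagonalTerm, h, pow_div_two_of_eq q
    (show (n + 1) * (3 * n + 2) = n * (3 * n + 1) + 2 * (2 * n + 1) by ring)]
  ring

theorem summable_norm_pentagonalTerm (ζ : ℂ) (hq : ‖q‖ < 1) :
    Summable fun n => ‖pentagonalTerm q ζ n‖ := by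
  refine summable_norm_of_succ_eq_mul (pentagonalTerm_succ q ζ) ?_
  have hpow : Tendsto (fun n => q ^ (3 * n + 2)) atTop (𝓝 0) :=
    (tendsto_pow_atTop_nhds_zero_of_norm_lt_one hq).comp
      (tendsto_atTop_mono (fun n => show n ≤ 3 * n + 2 by omega) tendsto_id)
  simpa using (hpow.const_mul (ζ ^ 3)).neg

theorem summable_pentagonalPair (ζ : ℂ) (hq : ‖q‖ < 1) : Summable (pentagonalPair q ζ) := by
  have hT := summable_norm_pentagonalTerm ζ hq
  refine .congr (.add (.of_norm_bounded (hT.mul_left (‖ζ‖ ^ 2)) fun n => ?_)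
    ((summable_nat_add_iff 1).mpr hT.of_norm)) fun n => (pentagonalPair_eq q ζ n).symm
  rw [norm_mul, norm_neg, ← norm_pow]
  gcongr
  exact norm_mul_pow_le hq.le _ _

theorem pentagonalPair_eq_remainder_sub (hq : ‖q‖ < 1) (hζq : ‖ζ * q‖ < 1) (n : ℕ) :
    pentagonalPair q ζ n = pentagonalRemainder q ζ n - pentagonalRemainder q ζ (n + 1) := by
  have hF := fSeries_eq hq (qPoch.ne_zero ((norm_mul_pow_mul_le hq.le ζ n).trans_lt hζq) hq.le)
  rw [mul_assoc ζ, ← pow_succ] at hF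
  rw [pentagonalPair_eq, pentagonalRemainder, pentagonalRemainder, hF, pentagonalTerm_succ]
  ring

theorem tendsto_pentagonalRemainder (hq : ‖q‖ < 1) (hζq : ‖ζ * q‖ < 1) :
    Tendsto (pentagonalRemainder q ζ) atTop (𝓝 0) := by
  obtain ⟨C, hC⟩ := exists_norm_fSeries_le hq ‖ζ‖ hζq
  refine (summable_norm_pentagonalTerm ζ hq).of_norm.tendsto_atTop_zero
    |>.zero_mul_isBoundedUnder_le (isBoundedUnder_of ⟨C + 1, fun n => ?_⟩)
  calc ‖fSeries q (ζ * q ^ n) - 1‖ ≤ ‖fSeries q (ζ * q ^ n)‖ + ‖(1 : ℂ)‖ := norm_sub_le _ _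
    _ ≤ C + 1 := by
      rw [norm_one]
      gcongr
      exact hC _ (norm_mul_pow_le hq.le ζ n) (norm_mul_pow_mul_le hq.le ζ n)

end pentagonal

theorem stmt_9_general (q ζ : ℂ) (hq : ‖q‖ < 1) (hζq : ‖ζ * q‖ < 1) :
    1 + ∑' n : ℕ, (-1 : ℂ) ^ (n + 1) *
        (ζ ^ (3 * (n + 1) - 1) * q ^ ((n + 1) * (3 * (n + 1) - 1) / 2)
          + ζ ^ (3 * (n + 1)) * q ^ ((n + 1) * (3 * (n + 1) + 1) / 2))
      = ∑' n : ℕ, (-1 : ℂ) ^ n * ζ ^ (2 * n) * q ^ (n * (n + 1) / 2) / qPoch (ζ * q) q n := by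
  have hsum : HasSum (pentagonalPair q ζ) (pentagonalRemainder q ζ 0) :=
    hasSum_of_eq_sub_succ (summable_pentagonalPair ζ hq)
      (pentagonalPair_eq_remainder_sub hq hζq) (tendsto_pentagonalRemainder hq hζq)
  change 1 + ∑' n, pentagonalPair q ζ n = fSeries q ζ
  simp [hsum.tsum_eq, pentagonalRemainder, pentagonalTerm]

/-- For |q|<1 and |ζq|<1 (with nonvanishing denominators),
`1 + ∑_{n≥1} (-1)^n (ζ^{3n-1} q^{n(3n-1)/2} + ζ^{3n} q^{n(3n+1)/2})
  = ∑_{n≥0} (-1)^n ζ^{2n} q^{n(n+1)/2}/(ζq;q)_n`. -/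
theorem stmt_9 (q ζ : ℂ) (hq : ‖q‖ < 1) (hζq : ‖ζ * q‖ < 1)
    (hden : ∀ n : ℕ, qPoch (ζ * q) q n ≠ 0) :
    1 + ∑' n : ℕ, (-1 : ℂ) ^ (n + 1) *
        (ζ ^ (3 * (n + 1) - 1) * q ^ ((n + 1) * (3 * (n + 1) - 1) / 2)
          + ζ ^ (3 * (n + 1)) * q ^ ((n + 1) * (3 * (n + 1) + 1) / 2))
      = ∑' n : ℕ, (-1 : ℂ) ^ n * ζ ^ (2 * n) * q ^ (n * (n + 1) / 2) / qPoch (ζ * q) q n :=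
  stmt_9_general q ζ hq hζq
end

section
/- For |q|<1, the generating function of restricted overpartitions satisfies ∑_{n≥0} (−q^{2n+3};q²)_∞ q^{2n+1}/(q^{2n+2},q^{2n+3};q²)_∞ + ∑_{n≥1} (−q^{2n+1};q²)_∞ q^{2n}/(q^{2n},q^{2n+1};q²)_∞ = (q(−q;q²)_∞/(q²,q³;q²)_∞)·∑_{n≥0} (q²,q³;q²)_n q^{2n}/(−q³;q²)_n. -/
open scoped BigOperators

/-- The infinite q-Pochhammer symbol `(a;q)_∞ = ∏_{j=0}^{∞} (1 - a q^j)`. -/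
noncomputable def qPochInf (a q : ℂ) : ℂ := ∏' j : ℕ, (1 - a * q ^ j)

/-!
Splitting `(a;q²)_∞ = (a;q²)_n (aq^{2n};q²)_∞` in numerator and denominator shows that the
`n`-th term of the first sum is `q^{2n+1} (-q³;q²)_∞/(q²,q³;q²)_∞ · (q²,q³;q²)_n/(-q³;q²)_n`,
and the `n`-th term of the second sum is `q` times the `n`-th term of the first. Hence the left
side is `(1 + q)` times the first sum, and `(1 + q)(-q³;q²)_∞ = (-q;q²)_∞`. The identity holds
termwise, so no convergence of the series is needed.
-/

lemma multipliable_one_sub_mul_pow (a : ℂ) {Q : ℂ} (hQ : ‖Q‖ < 1) :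
    Multipliable fun j : ℕ ↦ 1 - a * Q ^ j := by
  simp_rw [sub_eq_add_neg]
  refine multipliable_one_add_of_summable ?_
  simpa only [norm_neg, norm_mul, norm_pow] using
    (summable_geometric_of_lt_one (norm_nonneg Q) hQ).mul_left ‖a‖

lemma qPochInf_eq_qPoch_mul (a : ℂ) {Q : ℂ} (hQ : ‖Q‖ < 1) (n : ℕ) :
    qPochInf a Q = qPoch a Q n * qPochInf (a * Q ^ n) Q := by
  have htail (j : ℕ) : 1 - a * Q ^ (j + n) = 1 - a * Q ^ n * Q ^ j := by ring
  have hmul : Multipliable fun j : ℕ ↦ 1 - a * Q ^ (j + n) := by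
    simpa only [htail] using multipliable_one_sub_mul_pow (a * Q ^ n) hQ
  rw [qPochInf, ← Multipliable.prod_mul_tprod_nat_mul' (f := fun j ↦ 1 - a * Q ^ j) hmul,
    tprod_congr htail]
  rfl

lemma qPochInf_eq_one_sub_mul (a : ℂ) {Q : ℂ} (hQ : ‖Q‖ < 1) :
    qPochInf a Q = (1 - a) * qPochInf (a * Q) Q := by
  rw [qPochInf_eq_qPoch_mul a hQ 1, pow_one]
  simp only [qPoch, Finset.prod_range_one, pow_zero, mul_one]

lemma qPoch_ne_zero {a Q : ℂ} (ha : ‖a‖ < 1) (hQ : ‖Q‖ ≤ 1) (n : ℕ) : qPoch a Q n ≠ 0 :=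
  Finset.prod_ne_zero_iff.mpr fun j _ h ↦ by
    have hlt : ‖a * Q ^ j‖ < 1 := by
      rw [norm_mul, norm_pow]
      exact (mul_le_of_le_one_right (norm_nonneg a) (pow_le_one₀ (norm_nonneg Q) hQ)).trans_lt ha
    rw [← sub_eq_zero.mp h, norm_one] at hlt
    exact lt_irrefl 1 hlt

lemma qPochInf_tail_div {a b c Q : ℂ} (hQ : ‖Q‖ < 1) (n : ℕ) (ha : qPoch a Q n ≠ 0)
    (hb : qPoch b Q n ≠ 0) (hc : qPoch c Q n ≠ 0) :
    qPochInf (a * Q ^ n) Q / (qPochInf (b * Q ^ n) Q * qPochInf (c * Q ^ n) Q) =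
      qPochInf a Q / (qPochInf b Q * qPochInf c Q) *
        (qPoch b Q n * qPoch c Q n / qPoch a Q n) := by
  have hK : qPoch a Q n * qPoch b Q n * qPoch c Q n ≠ 0 := mul_ne_zero (mul_ne_zero ha hb) hc
  rw [qPochInf_eq_qPoch_mul a hQ n, qPochInf_eq_qPoch_mul b hQ n, qPochInf_eq_qPoch_mul c hQ n,
    ← mul_div_mul_right _ _ hK]
  ring

lemma term_eq_qPochInf_ratio_mul {q : ℂ} (hq : ‖q‖ < 1) (n : ℕ) :
    qPochInf (-q ^ (2 * n + 3)) (q ^ 2) * q ^ (2 * n + 1) /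
        (qPochInf (q ^ (2 * n + 2)) (q ^ 2) * qPochInf (q ^ (2 * n + 3)) (q ^ 2)) =
      q * qPochInf (-q ^ 3) (q ^ 2) / (qPochInf (q ^ 2) (q ^ 2) * qPochInf (q ^ 3) (q ^ 2)) *
        (qPoch (q ^ 2) (q ^ 2) n * qPoch (q ^ 3) (q ^ 2) n * q ^ (2 * n) /
          qPoch (-q ^ 3) (q ^ 2) n) := by
  have hpow (k : ℕ) (hk : 1 ≤ k) : ‖q ^ k‖ < 1 := by
    rw [norm_pow]; exact pow_lt_one₀ (norm_nonneg q) hq (by omega)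
  have hQ : ‖q ^ 2‖ < 1 := hpow 2 (by norm_num)
  have htail := qPochInf_tail_div hQ n
    (qPoch_ne_zero (a := -q ^ 3) (by rw [norm_neg]; exact hpow 3 (by norm_num)) hQ.le n)
    (qPoch_ne_zero hQ hQ.le n) (qPoch_ne_zero (hpow 3 (by norm_num)) hQ.le n)
  rw [show -q ^ 3 * (q ^ 2) ^ n = -q ^ (2 * n + 3) by ring,
    show q ^ 2 * (q ^ 2) ^ n = q ^ (2 * n + 2) by ring,
    show q ^ 3 * (q ^ 2) ^ n = q ^ (2 * n + 3) by ring] at htail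
  rw [mul_div_right_comm, htail, pow_succ]
  ring

theorem stmt_13_general (q : ℂ) (hq : ‖q‖ < 1) :
    (∑' n : ℕ, qPochInf (-q ^ (2 * n + 3)) (q ^ 2) * q ^ (2 * n + 1) /
        (qPochInf (q ^ (2 * n + 2)) (q ^ 2) * qPochInf (q ^ (2 * n + 3)) (q ^ 2)))
    + (∑' n : ℕ, qPochInf (-q ^ (2 * (n + 1) + 1)) (q ^ 2) * q ^ (2 * (n + 1)) /
        (qPochInf (q ^ (2 * (n + 1))) (q ^ 2) * qPochInf (q ^ (2 * (n + 1) + 1)) (q ^ 2)))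
      = q * qPochInf (-q) (q ^ 2) / (qPochInf (q ^ 2) (q ^ 2) * qPochInf (q ^ 3) (q ^ 2)) *
          ∑' n : ℕ, qPoch (q ^ 2) (q ^ 2) n * qPoch (q ^ 3) (q ^ 2) n * q ^ (2 * n) /
            qPoch (-q ^ 3) (q ^ 2) n := by
  have hQ : ‖q ^ 2‖ < 1 := by
    rw [norm_pow]; exact pow_lt_one₀ (norm_nonneg q) hq (by norm_num)
  have second_eq (n : ℕ) :
      qPochInf (-q ^ (2 * (n + 1) + 1)) (q ^ 2) * q ^ (2 * (n + 1)) /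
          (qPochInf (q ^ (2 * (n + 1))) (q ^ 2) * qPochInf (q ^ (2 * (n + 1) + 1)) (q ^ 2)) =
        q * (qPochInf (-q ^ (2 * n + 3)) (q ^ 2) * q ^ (2 * n + 1) /
          (qPochInf (q ^ (2 * n + 2)) (q ^ 2) * qPochInf (q ^ (2 * n + 3)) (q ^ 2))) := by
    rw [show 2 * (n + 1) + 1 = 2 * n + 3 by ring, show 2 * (n + 1) = 2 * n + 2 by ring]
    ring
  rw [tsum_congr second_eq, tsum_mul_left, ← one_add_mul, tsum_congr (term_eq_qPochInf_ratio_mul hq),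
    tsum_mul_left, qPochInf_eq_one_sub_mul (-q) hQ, show -q * q ^ 2 = -q ^ 3 by ring,
    sub_neg_eq_add]
  ring

/-- For 0<|q|<1,
`∑_{n≥0} (-q^{2n+3};q²)_∞ q^{2n+1}/(q^{2n+2},q^{2n+3};q²)_∞
  + ∑_{n≥1} (-q^{2n+1};q²)_∞ q^{2n}/(q^{2n},q^{2n+1};q²)_∞
  = (q (-q;q²)_∞/(q²,q³;q²)_∞) ∑_{n≥0} (q²,q³;q²)_n q^{2n}/(-q³;q²)_n`. -/
theorem stmt_13 (q : ℂ) (hq0 : q ≠ 0) (hq : ‖q‖ < 1) :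
    (∑' n : ℕ, qPochInf (-q ^ (2 * n + 3)) (q ^ 2) * q ^ (2 * n + 1) /
        (qPochInf (q ^ (2 * n + 2)) (q ^ 2) * qPochInf (q ^ (2 * n + 3)) (q ^ 2)))
    + (∑' n : ℕ, qPochInf (-q ^ (2 * (n + 1) + 1)) (q ^ 2) * q ^ (2 * (n + 1)) /
        (qPochInf (q ^ (2 * (n + 1))) (q ^ 2) * qPochInf (q ^ (2 * (n + 1) + 1)) (q ^ 2)))
      = q * qPochInf (-q) (q ^ 2) / (qPochInf (q ^ 2) (q ^ 2) * qPochInf (q ^ 3) (q ^ 2)) *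
          ∑' n : ℕ, qPoch (q ^ 2) (q ^ 2) n * qPoch (q ^ 3) (q ^ 2) n * q ^ (2 * n) /
            qPoch (-q ^ 3) (q ^ 2) n :=
  stmt_13_general q hq
end

section
/- For |q|<1 and ζ in the unit disk with appropriate nonvanishing conditions, Garvan's identity holds: ∑_{n≥1} (−1)^{n+1} ζ^n q^{n²}/((1−ζq^{2n})·(ζq;q²)_n) = ∑_{n≥1} (q;q)_{n−1} ζ^n q^{n(n+1)/2}/(ζq;q)_n. -/
open scoped BigOperators
open Filter

namespace GarvanAux

noncomputable def ellT (q z : ℂ) (n : ℕ) : ℂ :=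
  (-1 : ℂ) ^ n * z ^ (n + 1) * q ^ ((n + 1) ^ 2) /
    ((1 - z * q ^ (2 * (n + 1))) * qPoch (z * q) (q ^ 2) (n + 1))

noncomputable def arrT (q z : ℂ) (n : ℕ) : ℂ :=
  qPoch q q n * z ^ (n + 1) * q ^ ((n + 1) * (n + 2) / 2) / qPoch (z * q) q (n + 1)

noncomputable def TT (q z : ℂ) (n : ℕ) : ℂ :=
  qPoch q q n * z ^ (n + 1) * q ^ ((n + 1) * (n + 2) / 2) / qPoch (z * q ^ 2) q (n + 1)

noncomputable def LS (q z : ℂ) : ℂ := ∑' n, ellT q z n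
noncomputable def RS (q z : ℂ) : ℂ := ∑' n, arrT q z n

/-! ### basic norm facts -/

lemma qPoch_succ_left (a p : ℂ) (n : ℕ) :
    qPoch a p (n + 1) = (1 - a) * qPoch (a * p) p n := by
  unfold qPoch
  rw [Finset.prod_range_succ']
  simp only [pow_zero, mul_one]
  rw [mul_comm]
  congr 1
  refine Finset.prod_congr rfl fun j _ => ?_
  ring

lemma qPoch_succ_right (a p : ℂ) (n : ℕ) :
    qPoch a p (n + 1) = qPoch a p n * (1 - a * p ^ n) := Finset.prod_range_succ _ _

lemma norm_one_sub_ge {w : ℂ} {r : ℝ} (hw : ‖w‖ ≤ r) : 1 - r ≤ ‖1 - w‖ := by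
  have h := norm_sub_norm_le (1 : ℂ) w
  simp only [norm_one] at h
  linarith

lemma one_sub_ne_zero {w : ℂ} {r : ℝ} (hw : ‖w‖ ≤ r) (hr : r < 1) : (1 : ℂ) - w ≠ 0 := by
  intro h
  have := norm_one_sub_ge hw
  rw [h, norm_zero] at this
  linarith

lemma norm_factor {q z u v : ℂ} (hz : ‖z‖ ≤ 1) (hu : ‖u‖ ≤ ‖q‖) (hv : ‖v‖ ≤ 1)
    (j : ℕ) : ‖z * u * v ^ j‖ ≤ ‖q‖ := by
  rw [norm_mul, norm_mul, norm_pow]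
  calc ‖z‖ * ‖u‖ * ‖v‖ ^ j ≤ 1 * ‖q‖ * 1 := by
        refine mul_le_mul (mul_le_mul hz hu (norm_nonneg _) (by norm_num)) ?_ ?_ ?_
        · exact pow_le_one₀ (norm_nonneg _) hv
        · positivity
        · positivity
    _ = ‖q‖ := by ring

lemma qPoch_norm_ge {q z u v : ℂ} (hq : ‖q‖ < 1) (hz : ‖z‖ ≤ 1) (hu : ‖u‖ ≤ ‖q‖) (hv : ‖v‖ ≤ 1)
    (n : ℕ) : (1 - ‖q‖) ^ n ≤ ‖qPoch (z * u) v n‖ := by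
  unfold qPoch
  rw [norm_prod]
  calc (1 - ‖q‖) ^ n = ∏ _j ∈ Finset.range n, (1 - ‖q‖) := by
        rw [Finset.prod_const, Finset.card_range]
    _ ≤ ∏ j ∈ Finset.range n, ‖1 - z * u * v ^ j‖ := by
        refine Finset.prod_le_prod (fun j _ => ?_) (fun j _ => ?_)
        · linarith
        · exact norm_one_sub_ge (norm_factor hz hu hv j)

lemma qPoch_ne_zero {q z u v : ℂ} (hq : ‖q‖ < 1) (hz : ‖z‖ ≤ 1) (hu : ‖u‖ ≤ ‖q‖)
    (hv : ‖v‖ ≤ 1) (n : ℕ) : qPoch (z * u) v n ≠ 0 := by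
  intro h
  have h1 := qPoch_norm_ge hq hz hu hv n
  rw [h, norm_zero] at h1
  have h2 : (0:ℝ) < (1 - ‖q‖) ^ n := pow_pos (by linarith) n
  linarith

lemma norm_qPoch_qq_le (q : ℂ) (hq : ‖q‖ < 1) (n : ℕ) : ‖qPoch q q n‖ ≤ 2 ^ n := by
  unfold qPoch
  rw [norm_prod]
  calc ∏ j ∈ Finset.range n, ‖1 - q * q ^ j‖ ≤ ∏ _j ∈ Finset.range n, (2:ℝ) := by
        refine Finset.prod_le_prod (fun j _ => norm_nonneg _) (fun j _ => ?_)
        have h1 : ‖q * q ^ j‖ ≤ 1 := by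
          rw [norm_mul, norm_pow]
          calc ‖q‖ * ‖q‖ ^ j ≤ 1 * 1 :=
                mul_le_mul hq.le (pow_le_one₀ (norm_nonneg _) hq.le) (by positivity) (by norm_num)
            _ = 1 := by norm_num
        calc ‖1 - q * q ^ j‖ ≤ ‖(1:ℂ)‖ + ‖q * q ^ j‖ := norm_sub_le _ _
          _ ≤ 1 + 1 := by rw [norm_one]; linarith
          _ = 2 := by norm_num
    _ = 2 ^ n := by rw [Finset.prod_const, Finset.card_range]

/-! ### bounds and summability -/

noncomputable def Bl (t d : ℝ) (n : ℕ) : ℝ := t ^ ((n+1)^2) / d ^ (n+2)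
noncomputable def Br (t d : ℝ) (n : ℕ) : ℝ := 2 ^ n * t ^ ((n+1)*(n+2)/2) / d ^ (n+1)
noncomputable def Bg (t d : ℝ) (n : ℕ) : ℝ := t ^ (n*n) / d ^ n

lemma tri_succ (n : ℕ) : (n+1)*(n+2)/2 + (n+2) = (n+2)*(n+3)/2 := by
  have h : (n+2)*(n+3) = (n+1)*(n+2) + 2*(n+2) := by ring
  have h2 : (n+1)*(n+2) % 2 = 0 := Nat.even_iff.mp (Nat.even_mul_succ_self (n+1))
  omega

lemma summable_helper {f : ℕ → ℝ} (hf : ∀ n, 0 ≤ f n) {t : ℝ} (c : ℝ) (h0 : 0 ≤ t)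
    (h1 : t < 1) (h : ∀ n, f (n+1) ≤ c * t ^ n * f n) : Summable f := by
  refine summable_of_ratio_norm_eventually_le (r := 1/2) (by norm_num) ?_
  have hten : Tendsto (fun n : ℕ => c * t ^ n) atTop (nhds 0) := by
    have := (tendsto_pow_atTop_nhds_zero_of_lt_one h0 h1).const_mul c
    simpa using this
  filter_upwards [hten.eventually_le_const (by norm_num : (0:ℝ) < 1/2)] with n hn
  rw [Real.norm_eq_abs, Real.norm_eq_abs, abs_of_nonneg (hf _), abs_of_nonneg (hf _)]
  calc f (n+1) ≤ c * t ^ n * f n := h n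
    _ ≤ (1/2) * f n := mul_le_mul_of_nonneg_right hn (hf n)

lemma summable_Bl {t d : ℝ} (h0 : 0 ≤ t) (h1 : t < 1) (hd : 0 < d) :
    Summable (Bl t d) := by
  refine summable_helper (fun n => by unfold Bl; positivity) (1/d) h0 h1 (fun n => ?_)
  unfold Bl
  have hle : t ^ ((n+2)^2) ≤ t ^ (n + (n+1)^2) :=
    pow_le_pow_of_le_one h0 h1.le (by nlinarith)
  calc t ^ ((n+2)^2) / d ^ (n+3) ≤ t ^ (n + (n+1)^2) / d ^ (n+3) := by
        apply div_le_div_of_nonneg_right hle (by positivity) |>.trans_eq rfl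
    _ = 1/d * t ^ n * (t ^ ((n+1)^2) / d ^ (n+2)) := by
        rw [pow_add]
        field_simp [hd.ne']
        try ring
        try simp

lemma summable_Br {t d : ℝ} (h0 : 0 ≤ t) (h1 : t < 1) (hd : 0 < d) :
    Summable (Br t d) := by
  refine summable_helper (fun n => by unfold Br; positivity) (2/d) h0 h1 (fun n => ?_)
  unfold Br
  have he : (n+2)*(n+3)/2 = (n+1)*(n+2)/2 + (n+2) := (tri_succ n).symm
  have hle : t ^ ((n+2)*(n+3)/2) ≤ t ^ (n + (n+1)*(n+2)/2) := by
    refine pow_le_pow_of_le_one h0 h1.le ?_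
    omega
  calc 2^(n+1) * t ^ ((n+2)*(n+3)/2) / d ^ (n+2)
      ≤ 2^(n+1) * t ^ (n + (n+1)*(n+2)/2) / d ^ (n+2) := by
        apply div_le_div_of_nonneg_right _ (by positivity)
        exact mul_le_mul_of_nonneg_left hle (by positivity)
    _ = 2/d * t ^ n * (2^n * t ^ ((n+1)*(n+2)/2) / d ^ (n+1)) := by
        rw [pow_add, pow_succ]
        field_simp [hd.ne']
        try ring
        try simp

lemma summable_Bg {t d : ℝ} (h0 : 0 ≤ t) (h1 : t < 1) (hd : 0 < d) :
    Summable (Bg t d) := by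
  refine summable_helper (fun n => by unfold Bg; positivity) (1/d) h0 h1 (fun n => ?_)
  unfold Bg
  have hle : t ^ ((n+1)*(n+1)) ≤ t ^ (n + n*n) :=
    pow_le_pow_of_le_one h0 h1.le (by nlinarith)
  calc t ^ ((n+1)*(n+1)) / d ^ (n+1) ≤ t ^ (n + n*n) / d ^ (n+1) :=
        div_le_div_of_nonneg_right hle (by positivity) |>.trans_eq rfl
    _ = 1/d * t ^ n * (t ^ (n*n) / d ^ n) := by
        rw [pow_add, pow_succ]
        field_simp [hd.ne']
        try ring
        try simp

section Bounds

variable {q z : ℂ}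

lemma hv_q (hq : ‖q‖ < 1) : ‖q‖ ≤ 1 := hq.le
lemma hv_q2 (hq : ‖q‖ < 1) : ‖q ^ 2‖ ≤ 1 := by
  rw [norm_pow]; exact pow_le_one₀ (norm_nonneg _) hq.le

lemma norm_num_le (hq : ‖q‖ < 1) (hz : ‖z‖ ≤ 1) (k e : ℕ) :
    ‖(-1:ℂ) ^ k * z ^ (k+1) * q ^ e‖ ≤ ‖q‖ ^ e := by
  rw [norm_mul, norm_mul, norm_pow, norm_pow, norm_pow, norm_neg, norm_one, one_pow, one_mul]
  calc ‖z‖ ^ (k+1) * ‖q‖ ^ e ≤ 1 * ‖q‖ ^ e := by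
        exact mul_le_mul_of_nonneg_right (pow_le_one₀ (norm_nonneg _) hz) (by positivity)
    _ = ‖q‖ ^ e := one_mul _

lemma one_sub_pow_ne (hq : ‖q‖ < 1) (hz : ‖z‖ ≤ 1) {m : ℕ} (hm : 1 ≤ m) :
    (1 : ℂ) - z * q ^ m ≠ 0 := by
  refine one_sub_ne_zero (r := ‖q‖) ?_ hq
  rw [norm_mul, norm_pow]
  calc ‖z‖ * ‖q‖ ^ m ≤ 1 * ‖q‖ ^ 1 :=
        mul_le_mul hz (pow_le_pow_of_le_one (norm_nonneg _) hq.le hm) (by positivity) (by norm_num)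
    _ = ‖q‖ := by rw [one_mul, pow_one]

lemma norm_one_sub_pow_ge (hq : ‖q‖ < 1) (hz : ‖z‖ ≤ 1) {m : ℕ} (hm : 1 ≤ m) :
    1 - ‖q‖ ≤ ‖(1 : ℂ) - z * q ^ m‖ := by
  refine norm_one_sub_ge ?_
  rw [norm_mul, norm_pow]
  calc ‖z‖ * ‖q‖ ^ m ≤ 1 * ‖q‖ ^ 1 :=
        mul_le_mul hz (pow_le_pow_of_le_one (norm_nonneg _) hq.le hm) (by positivity) (by norm_num)
    _ = ‖q‖ := by rw [one_mul, pow_one]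

lemma ell_bound (hq : ‖q‖ < 1) (hz : ‖z‖ ≤ 1) (n : ℕ) :
    ‖ellT q z n‖ ≤ Bl ‖q‖ (1 - ‖q‖) n := by
  have hd : (0:ℝ) < 1 - ‖q‖ := by linarith
  unfold ellT Bl
  rw [norm_div]
  refine div_le_div₀ (by positivity) (norm_num_le hq hz n _) (by positivity) ?_
  rw [norm_mul]
  calc (1-‖q‖)^(n+2) = (1-‖q‖) * (1-‖q‖)^(n+1) := by ring
    _ ≤ ‖1 - z * q ^ (2*(n+1))‖ * ‖qPoch (z*q) (q^2) (n+1)‖ := by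
        refine mul_le_mul (norm_one_sub_pow_ge hq hz (by omega)) (qPoch_norm_ge hq hz le_rfl (hv_q2 hq) (n+1)) (by positivity) (norm_nonneg _)

lemma arr_den_bound (hq : ‖q‖ < 1) (hz : ‖z‖ ≤ 1) (n : ℕ) (num : ℂ)
    (den : ℂ) (hden : (1-‖q‖)^(n+1) ≤ ‖den‖) (hnum : ‖num‖ ≤ 2^n * ‖q‖^((n+1)*(n+2)/2)) :
    ‖num / den‖ ≤ Br ‖q‖ (1-‖q‖) n := by
  have hd : (0:ℝ) < 1 - ‖q‖ := by linarith
  unfold Br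
  rw [norm_div]
  exact div_le_div₀ (by positivity) hnum (by positivity) hden

lemma arr_num_bound (hq : ‖q‖ < 1) (hz : ‖z‖ ≤ 1) (n : ℕ) :
    ‖qPoch q q n * z ^ (n+1) * q ^ ((n+1)*(n+2)/2)‖ ≤ 2^n * ‖q‖^((n+1)*(n+2)/2) := by
  rw [norm_mul, norm_mul, norm_pow, norm_pow]
  refine mul_le_mul ?_ le_rfl (by positivity) (by positivity)
  calc ‖qPoch q q n‖ * ‖z‖^(n+1) ≤ 2^n * 1 := by
        refine mul_le_mul (norm_qPoch_qq_le q hq n) (pow_le_one₀ (norm_nonneg _) hz) (by positivity) (by positivity)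
    _ = 2^n := mul_one _

lemma arr_bound (hq : ‖q‖ < 1) (hz : ‖z‖ ≤ 1) (n : ℕ) :
    ‖arrT q z n‖ ≤ Br ‖q‖ (1 - ‖q‖) n := by
  unfold arrT
  refine arr_den_bound hq hz n _ _ (qPoch_norm_ge (u := q) (v := q) hq hz le_rfl hq.le (n+1)) (arr_num_bound hq hz n)

lemma TT_bound (hq : ‖q‖ < 1) (hz : ‖z‖ ≤ 1) (n : ℕ) :
    ‖TT q z n‖ ≤ Br ‖q‖ (1 - ‖q‖) n := by
  unfold TT
  refine arr_den_bound hq hz n _ _ ?_ (arr_num_bound hq hz n)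
  exact qPoch_norm_ge (u := q^2) (v := q) hq hz (by
    rw [norm_pow]
    calc ‖q‖^2 ≤ ‖q‖^1 := pow_le_pow_of_le_one (norm_nonneg _) hq.le one_le_two
      _ = ‖q‖ := pow_one _) hq.le (n+1)

lemma summable_ell (hq : ‖q‖ < 1) (hz : ‖z‖ ≤ 1) : Summable (ellT q z) := by
  have hd : (0:ℝ) < 1 - ‖q‖ := by linarith
  refine Summable.of_norm (Summable.of_nonneg_of_le (fun n => norm_nonneg _) (ell_bound hq hz) (summable_Bl (norm_nonneg _) hq (by linarith)))

lemma summable_arr (hq : ‖q‖ < 1) (hz : ‖z‖ ≤ 1) : Summable (arrT q z) := by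
  refine Summable.of_norm (Summable.of_nonneg_of_le (fun n => norm_nonneg _) (arr_bound hq hz) (summable_Br (norm_nonneg _) hq (by linarith)))

lemma LS_bound (hq : ‖q‖ < 1) (hz : ‖z‖ ≤ 1) :
    ‖LS q z‖ ≤ ∑' n, Bl ‖q‖ (1-‖q‖) n := by
  refine (norm_tsum_le_tsum_norm ((summable_ell hq hz).norm)).trans ?_
  exact Summable.tsum_le_tsum (ell_bound hq hz) ((summable_ell hq hz).norm) (summable_Bl (norm_nonneg _) hq (by linarith))

lemma RS_bound (hq : ‖q‖ < 1) (hz : ‖z‖ ≤ 1) :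
    ‖RS q z‖ ≤ ∑' n, Br ‖q‖ (1-‖q‖) n := by
  refine (norm_tsum_le_tsum_norm ((summable_arr hq hz).norm)).trans ?_
  exact Summable.tsum_le_tsum (arr_bound hq hz) ((summable_arr hq hz).norm) (summable_Br (norm_nonneg _) hq (by linarith))

end Bounds

section Key

variable {q z : ℂ}

lemma one_sub_zq_ne (hq : ‖q‖ < 1) (hz : ‖z‖ ≤ 1) : (1:ℂ) - z * q ≠ 0 := by
  have h := one_sub_pow_ne (q := q) (z := z) hq hz (le_refl 1)
  rwa [pow_one] at h

/-- Termwise functional equation for the left-hand series. -/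
lemma key_ell (hq : ‖q‖ < 1) (hz : ‖z‖ ≤ 1) (n : ℕ) :
    (1 - z * q) * ellT q z (n+1) = -(z * q) * ellT q (z * q^2) n := by
  have hC : (1:ℂ) - z * q ≠ 0 := one_sub_zq_ne hq hz
  have hB : (1:ℂ) - z * q ^ (2*(n+2)) ≠ 0 := one_sub_pow_ne hq hz (by omega)
  have hA : qPoch (z * q^3) (q^2) (n+1) ≠ 0 :=
    qPoch_ne_zero (u := q^3) (v := q^2) hq hz
      (by
        rw [norm_pow]
        calc ‖q‖^3 ≤ ‖q‖^1 := pow_le_pow_of_le_one (norm_nonneg _) hq.le (by norm_num)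
          _ = ‖q‖ := pow_one _) (hv_q2 hq) (n+1)
  unfold ellT
  have h1 : qPoch (z*q) (q^2) (n+1+1) = (1 - z*q) * qPoch (z*q^3) (q^2) (n+1) := by
    rw [qPoch_succ_left]
    congr 2
    ring
  have h2 : qPoch ((z*q^2)*q) (q^2) (n+1) = qPoch (z*q^3) (q^2) (n+1) := by
    congr 1
    ring
  have h3 : (1:ℂ) - (z*q^2)*q^(2*(n+1)) = 1 - z*q^(2*(n+2)) := by ring
  have h4 : (n+1+1) = n+2 := rfl
  rw [h4, h1, h2, h3]
  field_simp
  ring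

/-- Termwise telescoping identity for the right-hand series. -/
lemma key_arr (hq : ‖q‖ < 1) (hz : ‖z‖ ≤ 1) (n : ℕ) :
    (1 - z * q) * arrT q z n + (z * q) * arrT q (z * q^2) n
      = TT q z n - TT q z (n+1) := by
  have hC : (1:ℂ) - z * q ≠ 0 := one_sub_zq_ne hq hz
  have hC2 : (1:ℂ) - z * q^2 ≠ 0 := one_sub_pow_ne hq hz (by omega)
  have hA : qPoch (z * q^2) q n ≠ 0 :=
    qPoch_ne_zero (u := q^2) (v := q) hq hz
      (by
        rw [norm_pow]
        calc ‖q‖^2 ≤ ‖q‖^1 := pow_le_pow_of_le_one (norm_nonneg _) hq.le (by norm_num)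
          _ = ‖q‖ := pow_one _) hq.le n
  have hN1 : (1:ℂ) - z*q^(n+2) ≠ 0 := one_sub_pow_ne hq hz (by omega)
  have hN2 : (1:ℂ) - z*q^(n+3) ≠ 0 := one_sub_pow_ne hq hz (by omega)
  unfold arrT TT
  -- rewrite exponent of TT (n+1)
  have hE : q ^ ((n+1+1)*(n+1+2)/2) = q ^ ((n+1)*(n+2)/2) * q^(n+2) := by
    have h4 : (n+1+1)*(n+1+2)/2 = (n+2)*(n+3)/2 := rfl
    rw [h4, ← tri_succ n, pow_add]
  rw [hE]
  -- pochhammer rewrites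
  have f1 : qPoch (z*q) q (n+1) = (1 - z*q) * qPoch (z*q^2) q n := by
    rw [qPoch_succ_left]
    congr 2
    ring
  have f2 : qPoch (z*q^2) q (n+1) = qPoch (z*q^2) q n * (1 - z*q^(n+2)) := by
    rw [qPoch_succ_right]
    congr 2
    ring
  have f3 : qPoch (z*q^2) q (n+1+1)
      = qPoch (z*q^2) q n * (1 - z*q^(n+2)) * (1 - z*q^(n+3)) := by
    rw [qPoch_succ_right, f2]
    congr 2
    ring
  have f4 : qPoch ((z*q^2)*q) q (n+1)
      = qPoch (z*q^2) q n * (1 - z*q^(n+2)) * (1 - z*q^(n+3)) / (1 - z*q^2) := by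
    rw [eq_div_iff hC2, ← f3, mul_comm, ← qPoch_succ_left]
  have f5 : qPoch q q (n+1) = qPoch q q n * (1 - q*q^n) := qPoch_succ_right _ _ _
  rw [f1, f2, f3, f4, f5]
  field_simp
  ring

lemma norm_zq2_le (hq : ‖q‖ < 1) (hz : ‖z‖ ≤ 1) : ‖z * q^2‖ ≤ 1 := by
  rw [norm_mul, norm_pow]
  calc ‖z‖ * ‖q‖^2 ≤ 1 * 1 :=
        mul_le_mul hz (pow_le_one₀ (norm_nonneg _) hq.le) (by positivity) (by norm_num)
    _ = 1 := by norm_num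

/-- Functional equation for the left-hand series. -/
lemma FE_L (hq : ‖q‖ < 1) (hz : ‖z‖ ≤ 1) :
    (1 - z * q) * LS q z + (z * q) * LS q (z * q^2) = z * q / (1 - z * q^2) := by
  have hC : (1:ℂ) - z * q ≠ 0 := one_sub_zq_ne hq hz
  have hC2 : (1:ℂ) - z * q^2 ≠ 0 := one_sub_pow_ne hq hz (by omega)
  have hsum := summable_ell hq hz
  have h0 : (1 - z*q) * ellT q z 0 = z*q/(1-z*q^2) := by
    unfold ellT qPoch
    norm_num [Finset.prod_range_one]
    field_simp
  have hstep : LS q z = ellT q z 0 + ∑' n, ellT q z (n+1) := Summable.tsum_eq_zero_add hsum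
  have h1 : (1 - z*q) * LS q z
      = (1 - z*q) * ellT q z 0 + ∑' n, (1 - z*q) * ellT q z (n+1) := by
    rw [hstep, mul_add, tsum_mul_left]
  have h2 : (∑' n, (1 - z*q) * ellT q z (n+1)) = ∑' n, -(z*q) * ellT q (z*q^2) n :=
    tsum_congr fun n => key_ell hq hz n
  have h3 : (∑' n, -(z*q) * ellT q (z*q^2) n) = -(z*q) * LS q (z*q^2) := tsum_mul_left
  rw [h1, h2, h3, h0]
  ring

/-- Functional equation for the right-hand series. -/
lemma FE_R (hq : ‖q‖ < 1) (hz : ‖z‖ ≤ 1) :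
    (1 - z * q) * RS q z + (z * q) * RS q (z * q^2) = z * q / (1 - z * q^2) := by
  have hd : (0:ℝ) < 1 - ‖q‖ := by linarith
  have hz' : ‖z * q^2‖ ≤ 1 := norm_zq2_le hq hz
  have hs1 := summable_arr hq hz
  have hs2 := summable_arr (z := z*q^2) hq hz'
  set c : ℕ → ℂ := fun n => (1 - z*q) * arrT q z n + (z*q) * arrT q (z*q^2) n with hc
  have hsc : Summable c := (hs1.mul_left _).add (hs2.mul_left _)
  have hpart : ∀ N, ∑ n ∈ Finset.range N, c n = TT q z 0 - TT q z N := by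
    intro N
    rw [Finset.sum_congr rfl (fun n _ => key_arr hq hz n)]
    exact Finset.sum_range_sub' (TT q z) N
  have hTlim : Tendsto (TT q z) atTop (nhds 0) :=
    squeeze_zero_norm (TT_bound hq hz)
      ((summable_Br (norm_nonneg _) hq hd).tendsto_atTop_zero)
  have hT0 : TT q z 0 = z*q/(1-z*q^2) := by
    unfold TT qPoch
    simp [Finset.prod_range_one]
  have h1 : Tendsto (fun N => ∑ n ∈ Finset.range N, c n) atTop (nhds (TT q z 0 - 0)) := by
    simp only [hpart]
    exact tendsto_const_nhds.sub hTlim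
  have h2 := hsc.hasSum.tendsto_sum_nat
  have h3 : ∑' n, c n = TT q z 0 := by
    have := tendsto_nhds_unique h2 h1
    simpa using this
  have h4 : ∑' n, c n = (1 - z*q) * RS q z + (z*q) * RS q (z*q^2) := by
    rw [hc]
    rw [Summable.tsum_add (hs1.mul_left _) (hs2.mul_left _), tsum_mul_left, tsum_mul_left]
    rfl
  rw [← h4, h3, hT0]

end Key

section Main

variable {q : ℂ}

lemma step_ineq (hq : ‖q‖ < 1) {w : ℂ} (hw : ‖w‖ ≤ 1) :
    (1 - ‖q‖) * ‖LS q w - RS q w‖ ≤ ‖w‖ * ‖q‖ * ‖LS q (w*q^2) - RS q (w*q^2)‖ := by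
  have hL := FE_L (z := w) hq hw
  have hR := FE_R (z := w) hq hw
  have hkey : (1 - w*q) * (LS q w - RS q w) = -((w*q) * (LS q (w*q^2) - RS q (w*q^2))) := by
    have := sub_eq_zero.mpr (hL.trans hR.symm)
    ring_nf at this ⊢
    linear_combination this
  have hnorm : ‖1 - w*q‖ * ‖LS q w - RS q w‖
      = ‖w‖ * ‖q‖ * ‖LS q (w*q^2) - RS q (w*q^2)‖ := by
    rw [← norm_mul, hkey, norm_neg, norm_mul, norm_mul]
  rw [← hnorm]
  refine mul_le_mul_of_nonneg_right ?_ (norm_nonneg _)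
  exact norm_one_sub_pow_ge (z := w) (m := 1) hq hw le_rfl |>.trans_eq (by rw [pow_one])

theorem LS_eq_RS (hq : ‖q‖ < 1) {ζ : ℂ} (hz : ‖ζ‖ ≤ 1) : LS q ζ = RS q ζ := by
  have hd : (0:ℝ) < 1 - ‖q‖ := by linarith
  set t := ‖q‖ with ht
  set d := 1 - ‖q‖ with hdd
  set M : ℝ := (∑' n, Bl t d n) + (∑' n, Br t d n) with hM
  set D : ℂ → ℂ := fun w => LS q w - RS q w with hD
  have hwn : ∀ n : ℕ, ‖ζ * q^(2*n)‖ ≤ 1 := by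
    intro n
    rw [norm_mul, norm_pow]
    calc ‖ζ‖ * ‖q‖^(2*n) ≤ 1 * 1 :=
          mul_le_mul hz (pow_le_one₀ (norm_nonneg _) hq.le) (by positivity) (by norm_num)
      _ = 1 := by norm_num
  have hDb : ∀ (w : ℂ), ‖w‖ ≤ 1 → ‖D w‖ ≤ M := by
    intro w hw
    calc ‖D w‖ ≤ ‖LS q w‖ + ‖RS q w‖ := norm_sub_le _ _
      _ ≤ M := add_le_add (LS_bound hq hw) (RS_bound hq hw)
  have hM0 : 0 ≤ M := le_trans (norm_nonneg _) (hDb 0 (by simp))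
  have iter : ∀ n : ℕ, ‖D ζ‖ ≤ Bg t d n * ‖D (ζ * q^(2*n))‖ := by
    intro n
    induction n with
    | zero => simp [Bg]
    | succ n ih =>
      have hw := hwn n
      have hstep := step_ineq hq (w := ζ * q^(2*n)) hw
      have hwb : ‖ζ * q^(2*n)‖ ≤ t^(2*n) := by
        rw [norm_mul, norm_pow]
        calc ‖ζ‖ * t^(2*n) ≤ 1 * t^(2*n) :=
              mul_le_mul_of_nonneg_right hz (by positivity)
          _ = t^(2*n) := one_mul _
      have hrw : (ζ * q^(2*n)) * q^2 = ζ * q^(2*(n+1)) := by ring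
      rw [hrw] at hstep
      have hDn : ‖D (ζ * q^(2*n))‖ ≤ t^(2*n) * t / d * ‖D (ζ * q^(2*(n+1)))‖ := by
        rw [div_mul_eq_mul_div, le_div_iff₀ hd]
        calc ‖D (ζ * q^(2*n))‖ * d = d * ‖D (ζ * q^(2*n))‖ := by ring
          _ ≤ ‖ζ * q^(2*n)‖ * ‖q‖ * ‖D (ζ * q^(2*(n+1)))‖ := hstep
          _ ≤ t^(2*n) * t * ‖D (ζ * q^(2*(n+1)))‖ := by
              refine mul_le_mul_of_nonneg_right ?_ (norm_nonneg _)
              exact mul_le_mul_of_nonneg_right hwb (norm_nonneg _)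
      calc ‖D ζ‖ ≤ Bg t d n * ‖D (ζ * q^(2*n))‖ := ih
        _ ≤ Bg t d n * (t^(2*n) * t / d * ‖D (ζ * q^(2*(n+1)))‖) := by
            refine mul_le_mul_of_nonneg_left hDn ?_
            unfold Bg
            positivity
        _ = Bg t d (n+1) * ‖D (ζ * q^(2*(n+1)))‖ := by
            unfold Bg
            rw [show (n+1)*(n+1) = n*n + (2*n+1) from by ring, pow_add, pow_succ]
            field_simp
            ring
  have hbound : ∀ n : ℕ, ‖D ζ‖ ≤ Bg t d n * M := by
    intro n
    calc ‖D ζ‖ ≤ Bg t d n * ‖D (ζ * q^(2*n))‖ := iter n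
      _ ≤ Bg t d n * M := by
          refine mul_le_mul_of_nonneg_left (hDb _ (hwn n)) ?_
          unfold Bg
          positivity
  have hlim : Tendsto (fun n => Bg t d n * M) atTop (nhds 0) := by
    have := (summable_Bg (norm_nonneg q) hq hd).tendsto_atTop_zero.mul_const M
    simpa using this
  have hle : ‖D ζ‖ ≤ 0 := ge_of_tendsto' hlim hbound
  have : D ζ = 0 := norm_le_zero_iff.mp hle
  exact sub_eq_zero.mp this

end Main

end GarvanAux

/-- Garvan's identity: for |q|<1 and ζ in the unit disk with nonvanishing denominators,
`∑_{n≥1} (-1)^{n+1} ζ^n q^{n²}/((1-ζq^{2n})(ζq;q²)_n)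
  = ∑_{n≥1} (q;q)_{n-1} ζ^n q^{n(n+1)/2}/(ζq;q)_n`. -/
theorem stmt_15 (q ζ : ℂ) (hq : ‖q‖ < 1) (hζ : ‖ζ‖ < 1)
    (hden1 : ∀ n : ℕ, 1 - ζ * q ^ (2 * (n + 1)) ≠ 0)
    (hden2 : ∀ n : ℕ, qPoch (ζ * q) (q ^ 2) (n + 1) ≠ 0)
    (hden3 : ∀ n : ℕ, qPoch (ζ * q) q (n + 1) ≠ 0) :
    ∑' n : ℕ, (-1 : ℂ) ^ n * ζ ^ (n + 1) * q ^ ((n + 1) ^ 2) /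
        ((1 - ζ * q ^ (2 * (n + 1))) * qPoch (ζ * q) (q ^ 2) (n + 1))
      = ∑' n : ℕ, qPoch q q n * ζ ^ (n + 1) * q ^ ((n + 1) * (n + 2) / 2) /
          qPoch (ζ * q) q (n + 1) := by
  exact GarvanAux.LS_eq_RS hq hζ.le
end

section
/- For |q|<1, the evaluation at ζ=−1 of the restricted overpartition generating function equals an eta-quotient: ∑_{n≥0} (−q^{2n+2},q^{2n+3};q²)_∞·(−q^{2n+1})/(−q^{2n+2};q²)_∞ + ∑_{n≥1} (−q^{2n},q^{2n+1};q²)_∞·(−q^{2n})/(−q^{2n};q²)_∞ = (1+q)·((q;q²)_∞ − 1). -/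
/-! With `T n = q^{2n+1} (q^{2n+3};q²)_∞`, the denominators cancel and the two series
are `-∑ T n` and `-q ∑ T n`. Since `(q^{2n+1};q²)_∞ = (1 - q^{2n+1}) (q^{2n+3};q²)_∞`,
`T n` is the difference of consecutive tails of `(q;q²)_∞`, and the tails tend to `1`,
so `∑ T n` telescopes to `1 - (q;q²)_∞`. -/

open scoped BigOperators

open Filter Topology Asymptotics

theorem tendsto_tprod_nat_add_of_tprod_ne_zero {K : Type*} [Field K] [TopologicalSpace K]
    [ContinuousMul K] [ContinuousInv₀ K] [T2Space K] {f : ℕ → K}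
    (hf : ∀ n, Multipliable fun k ↦ f (k + n)) (h0 : ∏' i, f i ≠ 0) :
    Tendsto (fun n ↦ ∏' k, f (k + n)) atTop (𝓝 1) := by
  have htail : ∀ n, ∏' k, f (k + n) = (∏' i, f i) / ∏ i ∈ Finset.range n, f i := by
    intro n
    have hsplit := (hf n).prod_mul_tprod_nat_mul'
    have hpartial : ∏ i ∈ Finset.range n, f i ≠ 0 := by
      rw [← hsplit] at h0
      exact left_ne_zero_of_mul h0
    rw [eq_div_iff hpartial, ← hsplit, mul_comm]
  have hprod : HasProd f (∏' i, f i) := by simpa only [add_zero] using (hf 0).hasProd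
  have hlim := (tendsto_const_nhds (x := ∏' i, f i)).div hprod.tendsto_prod_nat h0
  rw [div_self h0] at hlim
  exact hlim.congr fun n ↦ (htail n).symm

theorem hasSum_succ_sub_of_tendsto {G : Type*} [AddCommGroup G] [TopologicalSpace G]
    [IsTopologicalAddGroup G] [T2Space G] {f : ℕ → G} {l : G}
    (hs : Summable fun n ↦ f (n + 1) - f n) (hf : Tendsto f atTop (𝓝 l)) :
    HasSum (fun n ↦ f (n + 1) - f n) (l - f 0) := by
  rw [hs.hasSum_iff_tendsto_nat]
  simpa only [Finset.sum_range_sub] using hf.sub_const (f 0)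

theorem mul_pow_ne_one_of_norm_lt_one {a q : ℂ} (ha : ‖a‖ < 1) (hq : ‖q‖ ≤ 1)
    (j : ℕ) : a * q ^ j ≠ 1 := by
  intro h
  have : ‖a * q ^ j‖ < 1 := by
    rw [norm_mul, norm_pow]
    exact mul_lt_one_of_nonneg_of_lt_one_left (norm_nonneg a) ha
      (pow_le_one₀ (norm_nonneg q) hq)
  simp [h] at this

namespace qPochInf

variable {a q : ℂ}

theorem summable_norm_mul_pow (hq : ‖q‖ < 1) : Summable fun j : ℕ ↦ ‖a * q ^ j‖ := by
  simpa only [norm_mul, norm_pow] using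
    (summable_geometric_of_lt_one (norm_nonneg q) hq).mul_left ‖a‖

theorem multipliable (hq : ‖q‖ < 1) : Multipliable fun j : ℕ ↦ 1 - a * q ^ j := by
  simpa only [sub_eq_add_neg] using
    multipliable_one_add_of_summable (f := fun j ↦ -(a * q ^ j))
      (by simpa only [norm_neg] using summable_norm_mul_pow hq)

theorem ne_zero (hq : ‖q‖ < 1) (ha : ∀ j : ℕ, a * q ^ j ≠ 1) : qPochInf a q ≠ 0 := by
  simpa only [qPochInf, sub_eq_add_neg] using
    tprod_one_add_ne_zero_of_summable (f := fun j ↦ -(a * q ^ j))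
      (fun j ↦ by simpa only [← sub_eq_add_neg, sub_ne_zero] using (ha j).symm)
      (by simpa only [norm_neg] using summable_norm_mul_pow hq)

theorem ne_zero_of_norm_lt_one (hq : ‖q‖ < 1) (ha : ‖a‖ < 1) : qPochInf a q ≠ 0 :=
  ne_zero hq (mul_pow_ne_one_of_norm_lt_one ha hq.le)

theorem mul_pow_eq_tprod_nat_add (n : ℕ) :
    qPochInf (a * q ^ n) q = ∏' k, (1 - a * q ^ (k + n)) := by
  simp only [qPochInf, pow_add, mul_assoc, mul_comm (q ^ n)]

theorem multipliable_nat_add (hq : ‖q‖ < 1) (n : ℕ) :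
    Multipliable fun k : ℕ ↦ 1 - a * q ^ (k + n) := by
  have h := multipliable (a := a * q ^ n) hq
  simp only [mul_assoc, ← pow_add] at h
  simpa only [add_comm n] using h

theorem eq_one_sub_mul (hq : ‖q‖ < 1) : qPochInf a q = (1 - a) * qPochInf (a * q) q := by
  rw [qPochInf, tprod_eq_zero_mul' (f := fun j ↦ 1 - a * q ^ j) (multipliable_nat_add hq 1),
    pow_zero, mul_one, ← mul_pow_eq_tprod_nat_add 1, pow_one]

theorem tendsto_mul_pow (hq : ‖q‖ < 1) (ha : ∀ j : ℕ, a * q ^ j ≠ 1) :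
    Tendsto (fun n ↦ qPochInf (a * q ^ n) q) atTop (𝓝 1) := by
  simpa only [mul_pow_eq_tprod_nat_add] using
    tendsto_tprod_nat_add_of_tprod_ne_zero (f := fun j ↦ 1 - a * q ^ j)
      (multipliable_nat_add hq) (ne_zero hq ha)

theorem hasSum_mul_pow_mul (hq : ‖q‖ < 1) (ha : ∀ j : ℕ, a * q ^ j ≠ 1) :
    HasSum (fun n : ℕ ↦ a * q ^ n * qPochInf (a * q ^ (n + 1)) q) (1 - qPochInf a q) := by
  have hstep : ∀ n : ℕ, a * q ^ n * qPochInf (a * q ^ (n + 1)) q =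
      qPochInf (a * q ^ (n + 1)) q - qPochInf (a * q ^ n) q := by
    intro n
    rw [eq_one_sub_mul hq (a := a * q ^ n), mul_assoc a (q ^ n) q, ← pow_succ]
    ring
  have hlim := tendsto_mul_pow hq ha
  have hsum : Summable fun n : ℕ ↦ a * q ^ n * qPochInf (a * q ^ (n + 1)) q := by
    have hbdd : (fun n : ℕ ↦ qPochInf (a * q ^ (n + 1)) q) =O[atTop] fun _ ↦ (1 : ℝ) :=
      (hlim.comp (tendsto_add_atTop_nat 1)).isBigO_one ℝ
    refine summable_of_isBigO_nat (summable_norm_mul_pow (a := a) hq) ?_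
    simpa only [mul_one] using (isBigO_norm_right.2 (isBigO_refl _ _)).mul hbdd
  simp only [hstep] at hsum ⊢
  simpa only [pow_zero, mul_one] using
    hasSum_succ_sub_of_tendsto (f := fun n ↦ qPochInf (a * q ^ n) q) hsum hlim

end qPochInf

/-- For |q|<1, the evaluation at ζ=-1 of the restricted overpartition generating function:
`∑_{n≥0} (-q^{2n+2},q^{2n+3};q²)_∞ (-q^{2n+1})/(-q^{2n+2};q²)_∞
  + ∑_{n≥1} (-q^{2n},q^{2n+1};q²)_∞ (-q^{2n})/(-q^{2n};q²)_∞ = (1+q)((q;q²)_∞ - 1)`. -/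
theorem stmt_18 (q : ℂ) (hq : ‖q‖ < 1) :
    (∑' n : ℕ, qPochInf (-q ^ (2 * n + 2)) (q ^ 2) * qPochInf (q ^ (2 * n + 3)) (q ^ 2) *
        (-q ^ (2 * n + 1)) / qPochInf (-q ^ (2 * n + 2)) (q ^ 2))
    + (∑' n : ℕ, qPochInf (-q ^ (2 * (n + 1))) (q ^ 2) * qPochInf (q ^ (2 * (n + 1) + 1)) (q ^ 2) *
        (-q ^ (2 * (n + 1))) / qPochInf (-q ^ (2 * (n + 1))) (q ^ 2))
      = (1 + q) * (qPochInf q (q ^ 2) - 1) := by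
  have hq2 : ‖q ^ 2‖ < 1 := by rw [norm_pow]; exact pow_lt_one₀ (norm_nonneg q) hq two_ne_zero
  have hden : ∀ m : ℕ, m ≠ 0 → qPochInf (-q ^ m) (q ^ 2) ≠ 0 := fun m hm ↦
    qPochInf.ne_zero_of_norm_lt_one hq2
      (by rw [norm_neg, norm_pow]; exact pow_lt_one₀ (norm_nonneg q) hq hm)
  set T : ℕ → ℂ := fun n ↦ q * (q ^ 2) ^ n * qPochInf (q * (q ^ 2) ^ (n + 1)) (q ^ 2)
  have hT : HasSum T (1 - qPochInf q (q ^ 2)) :=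
    qPochInf.hasSum_mul_pow_mul hq2 (mul_pow_ne_one_of_norm_lt_one hq hq2.le)
  have hodd : ∀ n : ℕ, q ^ (2 * n + 3) = q * (q ^ 2) ^ (n + 1) := fun n ↦ by ring
  have h1 : ∀ n : ℕ, qPochInf (-q ^ (2 * n + 2)) (q ^ 2) * qPochInf (q ^ (2 * n + 3)) (q ^ 2) *
      (-q ^ (2 * n + 1)) / qPochInf (-q ^ (2 * n + 2)) (q ^ 2) = -T n := fun n ↦ by
    rw [mul_assoc, mul_div_cancel_left₀ _ (hden _ (by omega)), hodd]
    ring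
  have h2 : ∀ n : ℕ, qPochInf (-q ^ (2 * (n + 1))) (q ^ 2) *
      qPochInf (q ^ (2 * (n + 1) + 1)) (q ^ 2) * (-q ^ (2 * (n + 1))) /
      qPochInf (-q ^ (2 * (n + 1))) (q ^ 2) = -q * T n := fun n ↦ by
    rw [mul_assoc, mul_div_cancel_left₀ _ (hden _ (by omega)),
      show 2 * (n + 1) + 1 = 2 * n + 3 by ring, hodd]
    ring
  rw [tsum_congr h1, tsum_congr h2, tsum_neg, tsum_mul_left, hT.tsum_eq]
  ring
end
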